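/- Let K be a field equipped with an absolute value |·| : K → ℝ, let X and Y be finite sets and f : X → Y a map. Suppose a = (a_x) ∈ K^X satisfies ∑_{x∈X} |a_x|² ≤ 1 and b = (b_x) ∈ K^X satisfies ∑_{x∈f⁻¹(y)} |b_x|² ≤ 1 for every y ∈ Y. If moreover either ∑_{x∈X} |a_x|² < 1, or ∑_{x∈f⁻¹(y)} |b_x|² < 1 for every y ∈ Y, then the contraction satisfies the strict inequality ∑_{y∈Y} |∑_{x∈f⁻¹(y)} a_x·b_x|² < 1. -/

import Mathlib

open scoped Classical

/-!
By Cauchy–Schwarz on each fiber, the `y`-th term of the contraction is at most `A y * B y`, where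
`A y` and `B y` are the fiberwise sums of `v (a x) ^ 2` and `v (b x) ^ 2`. Summing, the whole sum is
at most `(∑ y, A y) * B y₀ = (∑ x, v (a x) ^ 2) * B y₀` for a fiber `y₀` maximising `B`: a product
of two numbers in `[0, 1]`, one of which is `< 1`.
-/

open Finset

theorem AbsoluteValue.sq_sum_mul_le {R S ι : Type*} [Semiring R] [CommSemiring S] [LinearOrder S]
    [IsStrictOrderedRing S] [ExistsAddOfLE S] (v : AbsoluteValue R S) (s : Finset ι)
    (a b : ι → R) :
    v (∑ x ∈ s, a x * b x) ^ 2 ≤ (∑ x ∈ s, v (a x) ^ 2) * ∑ x ∈ s, v (b x) ^ 2 :=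
  calc v (∑ x ∈ s, a x * b x) ^ 2
      ≤ (∑ x ∈ s, v (a x) * v (b x)) ^ 2 := by
        gcongr
        simpa only [map_mul] using v.sum_le s (fun x => a x * b x)
    _ ≤ (∑ x ∈ s, v (a x) ^ 2) * ∑ x ∈ s, v (b x) ^ 2 := sum_mul_sq_le_sq_mul_sq s _ _

theorem Finset.sum_mul_lt_one {ι R : Type*} [Fintype ι] [CommSemiring R] [LinearOrder R]
    [IsStrictOrderedRing R] {A B : ι → R} (hA₀ : ∀ i, 0 ≤ A i) (hB₀ : ∀ i, 0 ≤ B i)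
    (hA : ∑ i, A i ≤ 1) (hB : ∀ i, B i ≤ 1) (hstrict : ∑ i, A i < 1 ∨ ∀ i, B i < 1) :
    ∑ i, A i * B i < 1 := by
  cases isEmpty_or_nonempty ι
  · simp
  obtain ⟨i₀, hi₀⟩ := Finite.exists_max B
  have hle : ∑ i, A i * B i ≤ (∑ i, A i) * B i₀ := by
    rw [sum_mul]
    exact sum_le_sum fun i _ => mul_le_mul_of_nonneg_left (hi₀ i) (hA₀ i)
  refine hle.trans_lt ?_
  rcases hstrict with hA' | hB'
  · exact mul_lt_one_of_nonneg_of_lt_one_left (sum_nonneg fun i _ => hA₀ i) hA' (hB i₀)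
  · exact mul_lt_one_of_nonneg_of_lt_one_right hA (hB₀ i₀) (hB' i₀)

/-- **The ideal property of the maximal ideal `m` at a real prime: `(O,m) ⊆ m` and `(m,O) ⊆ m`.**
Let `K` be a field with an absolute value `v : K → ℝ`, `X`, `Y` finite sets and
`f : X → Y` a map.  Suppose `a ∈ K^X` lies in the unit ℓ²-ball, and for every `y ∈ Y` the
restriction of `b ∈ K^X` to the fiber `f⁻¹(y)` lies in the unit ℓ²-ball.  If moreover either
`a` lies in the open unit ℓ²-ball, or every fiberwise restriction of `b` lies in the open unit
ℓ²-ball, then the contraction `(a, b)_y = ∑_{x ∈ f⁻¹(y)} a_x * b_x` lies in the open unit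
ℓ²-ball of `K^Y`. -/
theorem realPrime_contr_mem_maximalIdeal (K : Type*) [Field K] (v : AbsoluteValue K ℝ)
    (X Y : Type*) [Fintype X] [Fintype Y] (f : X → Y)
    (a : X → K) (ha : ∑ x : X, v (a x) ^ 2 ≤ 1)
    (b : X → K)
    (hb : ∀ y : Y, ∑ x ∈ Finset.univ.filter (fun x => f x = y), v (b x) ^ 2 ≤ 1)
    (hstrict : (∑ x : X, v (a x) ^ 2 < 1) ∨
      (∀ y : Y, ∑ x ∈ Finset.univ.filter (fun x => f x = y), v (b x) ^ 2 < 1)) :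
    ∑ y : Y, v (∑ x ∈ Finset.univ.filter (fun x => f x = y), a x * b x) ^ 2 < 1 := by
  rw [← sum_fiberwise univ f] at ha hstrict
  calc ∑ y, v (∑ x ∈ univ.filter (fun x => f x = y), a x * b x) ^ 2
      ≤ ∑ y, (∑ x ∈ univ.filter (fun x => f x = y), v (a x) ^ 2) *
          ∑ x ∈ univ.filter (fun x => f x = y), v (b x) ^ 2 :=
        sum_le_sum fun y _ => v.sq_sum_mul_le _ a b
    _ < 1 :=
        sum_mul_lt_one (fun _ => sum_nonneg fun _ _ => sq_nonneg _)
          (fun _ => sum_nonneg fun _ _ => sq_nonneg _) ha hb hstrict
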